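/- Let t ∈ Λ²V and e* ∈ V* both be nonzero. Then c_{e*}(t) = 0 if and only if there exist q, r ∈ V with t = q ∧ r, e*(q) = 0 and e*(r) = 0. (Equivalently: the contraction of t by e* vanishes exactly when t is decomposable and represents a line contained in the plane ker e*.) -/

import Mathlib

/-!
Choose `v` with `e v = 1`. On generators one checks
`q ∧ r + c_e(q ∧ r) ∧ v = (q - e(q) v) ∧ (r - e(r) v)`, so for every `t` the bivector
`t + c_e(t) ∧ v` lies in the span of the wedges of vectors of `ker e`; if `c_e(t) = 0`, so does `t`.
As `ker e` has dimension `3`, any two planes in it meet in some `w`, whence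
`q ∧ r + q' ∧ r' = w ∧ x + w ∧ y = w ∧ (x + y)`: the wedges of vectors of `ker e` are closed under
addition, so every element of their span is a single wedge `q ∧ r` with `q, r ∈ ker e`.
-/

open TensorProduct

variable (K V : Type*) [Field K] [AddCommGroup V] [Module K V]

/-- The wedge `q ∧ r` of two vectors, as an element of the second exterior power. -/
def wedge2 (q r : V) : ⋀[K]^2 V :=
  ⟨ExteriorAlgebra.ιMulti K 2 ![q, r],
    ExteriorAlgebra.ιMulti_range K 2 (Set.mem_range_self _)⟩

/-- The wedge `p ∧ q ∧ r` of three vectors, as an element of the third exterior power. -/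
def wedge3 (p q r : V) : ⋀[K]^3 V :=
  ⟨ExteriorAlgebra.ιMulti K 3 ![p, q, r],
    ExteriorAlgebra.ιMulti_range K 3 (Set.mem_range_self _)⟩

section Wedge2

variable {K V}

lemma coe_wedge2 (q r : V) :
    (wedge2 K V q r : ExteriorAlgebra K V) = ExteriorAlgebra.ι K q * ExteriorAlgebra.ι K r := by
  simp [wedge2, ExteriorAlgebra.ιMulti_apply, Matrix.vecTail]

@[simp] lemma wedge2_add_left (q q' r : V) :
    wedge2 K V (q + q') r = wedge2 K V q r + wedge2 K V q' r :=
  Subtype.ext <| by simp [coe_wedge2, add_mul]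

@[simp] lemma wedge2_add_right (q r r' : V) :
    wedge2 K V q (r + r') = wedge2 K V q r + wedge2 K V q r' :=
  Subtype.ext <| by simp [coe_wedge2, mul_add]

@[simp] lemma wedge2_smul_left (a : K) (q r : V) :
    wedge2 K V (a • q) r = a • wedge2 K V q r :=
  Subtype.ext <| by simp [coe_wedge2]

@[simp] lemma wedge2_smul_right (a : K) (q r : V) :
    wedge2 K V q (a • r) = a • wedge2 K V q r :=
  Subtype.ext <| by simp [coe_wedge2]

@[simp] lemma wedge2_sub_left (q q' r : V) :
    wedge2 K V (q - q') r = wedge2 K V q r - wedge2 K V q' r :=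
  Subtype.ext <| by simp [coe_wedge2, sub_mul]

@[simp] lemma wedge2_sub_right (q r r' : V) :
    wedge2 K V q (r - r') = wedge2 K V q r - wedge2 K V q r' :=
  Subtype.ext <| by simp [coe_wedge2, mul_sub]

@[simp] lemma wedge2_neg_right (q r : V) : wedge2 K V q (-r) = -wedge2 K V q r :=
  Subtype.ext <| by simp [coe_wedge2]

@[simp] lemma wedge2_self (q : V) : wedge2 K V q q = 0 :=
  Subtype.ext <| by simp [coe_wedge2]

lemma wedge2_swap (q r : V) : wedge2 K V r q = -wedge2 K V q r :=
  Subtype.ext <| by simp [coe_wedge2, eq_neg_iff_add_eq_zero, ExteriorAlgebra.ι_add_mul_swap]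

@[simp] lemma wedge2_zero_left (r : V) : wedge2 K V 0 r = 0 := by
  simpa using wedge2_smul_left (0 : K) 0 r

lemma span_range_wedge2 :
    Submodule.span K (Set.range fun p : V × V => wedge2 K V p.1 p.2) = ⊤ := by
  rw [← exteriorPower.ιMulti_span K 2 (M := V)]
  congr 1
  ext t
  constructor
  · rintro ⟨p, rfl⟩; exact ⟨![p.1, p.2], rfl⟩
  · rintro ⟨m, rfl⟩
    refine ⟨(m 0, m 1), congrArg (exteriorPower.ιMulti K 2) ?_⟩
    ext i; fin_cases i <;> rfl

lemma exists_wedge2_eq_wedge2_smul_add_smul (q r : V) {a b : K} (hab : a ≠ 0 ∨ b ≠ 0) :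
    ∃ c d : K, wedge2 K V q r = wedge2 K V (a • q + b • r) (c • q + d • r) := by
  rcases hab with ha | hb
  · refine ⟨0, a⁻¹, ?_⟩
    simp [smul_smul, ha]
  · refine ⟨-b⁻¹, 0, ?_⟩
    simp [smul_smul, hb, wedge2_swap r q]

lemma wedge2_eq_zero_of_smul_add_smul_eq_zero {a b : K} {q r : V} (hab : a ≠ 0 ∨ b ≠ 0)
    (h : a • q + b • r = 0) : wedge2 K V q r = 0 := by
  obtain ⟨c, d, hcd⟩ := exists_wedge2_eq_wedge2_smul_add_smul q r hab
  rw [hcd, h, wedge2_zero_left]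

lemma wedge2_add_wedge2_mem_image2 {U : Submodule K V} [FiniteDimensional K U]
    (hU : Module.finrank K U < 4) {q r q' r' : V} (hq : q ∈ U) (hr : r ∈ U) (hq' : q' ∈ U)
    (hr' : r' ∈ U) : wedge2 K V q r + wedge2 K V q' r' ∈ Set.image2 (wedge2 K V) U U := by
  have hdep : ¬ LinearIndependent K ![q, r, q', r'] := by
    intro hli
    have hspan : Submodule.span K (Set.range ![q, r, q', r']) ≤ U := by
      simp [Submodule.span_le, Set.insert_subset_iff, hq, hr, hq', hr']
    have := (finrank_span_eq_card hli).symm.trans_le (Submodule.finrank_mono hspan)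
    rw [Fintype.card_fin] at this
    omega
  -- a nontrivial relation among `q, r, q', r'` yields a vector `w` common to both planes
  obtain ⟨g, hg, i, hi⟩ := Fintype.not_linearIndependent_iff.1 hdep
  simp only [Fin.sum_univ_four, Matrix.cons_val] at hg
  have hw : g 0 • q + g 1 • r = -g 2 • q' + -g 3 • r' := by
    linear_combination (norm := module) hg
  by_cases h01 : g 0 ≠ 0 ∨ g 1 ≠ 0 <;> by_cases h23 : g 2 ≠ 0 ∨ g 3 ≠ 0
  · obtain ⟨c, d, hcd⟩ := exists_wedge2_eq_wedge2_smul_add_smul q r h01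
    obtain ⟨c', d', hcd'⟩ := exists_wedge2_eq_wedge2_smul_add_smul q' r' (a := -g 2) (b := -g 3)
      (by simpa using h23)
    refine ⟨g 0 • q + g 1 • r, ?_, c • q + d • r + (c' • q' + d' • r'), ?_, ?_⟩
    · exact U.add_mem (U.smul_mem _ hq) (U.smul_mem _ hr)
    · exact U.add_mem (U.add_mem (U.smul_mem _ hq) (U.smul_mem _ hr))
        (U.add_mem (U.smul_mem _ hq') (U.smul_mem _ hr'))
    · rw [hcd, hcd', ← hw, ← wedge2_add_right]
  · push Not at h23
    refine ⟨q', hq', r', hr', ?_⟩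
    rw [wedge2_eq_zero_of_smul_add_smul_eq_zero (q := q) (r := r) h01 (by simpa [h23] using hw),
      zero_add]
  · push Not at h01
    refine ⟨q, hq, r, hr, ?_⟩
    rw [wedge2_eq_zero_of_smul_add_smul_eq_zero (q := q') (r := r') h23 (by simpa [h01] using hg),
      add_zero]
  · push Not at h01 h23
    fin_cases i <;> simp_all

lemma mem_image2_wedge2_of_mem_span {U : Submodule K V} [FiniteDimensional K U]
    (hU : Module.finrank K U < 4) {t : ⋀[K]^2 V}
    (ht : t ∈ Submodule.span K (Set.image2 (wedge2 K V) U U)) :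
    t ∈ Set.image2 (wedge2 K V) U U := by
  induction ht using Submodule.span_induction with
  | mem t ht => exact ht
  | zero => exact ⟨0, U.zero_mem, 0, U.zero_mem, wedge2_self 0⟩
  | add s t _ _ hs ht =>
    obtain ⟨q, hq, r, hr, rfl⟩ := hs
    obtain ⟨q', hq', r', hr', rfl⟩ := ht
    exact wedge2_add_wedge2_mem_image2 hU hq hr hq' hr'
  | smul a t _ ht =>
    obtain ⟨q, hq, r, hr, rfl⟩ := ht
    exact ⟨a • q, U.smul_mem a hq, r, hr, wedge2_smul_left a q r⟩

lemma add_wedge2_contraction_mem_span {e : Module.Dual K V} {v : V} (hv : e v = 1)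
    (c : ⋀[K]^2 V →ₗ[K] V) (hc : ∀ q r, c (wedge2 K V q r) = e q • r - e r • q)
    (t : ⋀[K]^2 V) :
    t + wedge2 K V (c t) v ∈
      Submodule.span K (Set.image2 (wedge2 K V) (LinearMap.ker e) (LinearMap.ker e)) := by
  have ht : t ∈ Submodule.span K (Set.range fun p : V × V => wedge2 K V p.1 p.2) :=
    span_range_wedge2 (K := K) (V := V) ▸ Submodule.mem_top
  induction ht using Submodule.span_induction with
  | mem t ht =>
    obtain ⟨⟨q, r⟩, rfl⟩ := ht
    have key : wedge2 K V q r + wedge2 K V (c (wedge2 K V q r)) v =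
        wedge2 K V (q - e q • v) (r - e r • v) := by
      simp only [hc, wedge2_sub_left, wedge2_sub_right, wedge2_smul_left, wedge2_smul_right,
        wedge2_self, wedge2_swap v]
      module
    rw [key]
    exact Submodule.subset_span ⟨_, by simp [hv], _, by simp [hv], rfl⟩
  | zero => simp
  | add s t _ _ hs ht => simpa [add_add_add_comm] using add_mem hs ht
  | smul a t _ ht => simpa [smul_add] using Submodule.smul_mem _ a ht

end Wedge2

theorem contraction_eq_zero_iff
    (hV : Module.finrank K V = 4)
    (c : Module.Dual K V → (↥(⋀[K]^2 V) →ₗ[K] V))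
    (hc : ∀ (e : Module.Dual K V) (q r : V),
      c e (wedge2 K V q r) = e q • r - e r • q)
    (t : ⋀[K]^2 V) (e : Module.Dual K V) (he : e ≠ 0) :
    c e t = 0 ↔ ∃ q r : V, t = wedge2 K V q r ∧ e q = 0 ∧ e r = 0 := by
  constructor
  · intro h
    have : FiniteDimensional K V := .of_finrank_pos (by omega)
    obtain ⟨x, hx⟩ : ∃ x, e x ≠ 0 := DFunLike.ne_iff.1 he
    have hv : e ((e x)⁻¹ • x) = 1 := by simp [hx]
    have hker : Module.finrank K (LinearMap.ker e) < 4 :=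
      hV ▸ Submodule.finrank_lt (LinearMap.ker_eq_top.not.2 he)
    have ht := add_wedge2_contraction_mem_span hv (c e) (hc e) t
    rw [h, wedge2_zero_left, add_zero] at ht
    obtain ⟨q, hq, r, hr, rfl⟩ := mem_image2_wedge2_of_mem_span hker ht
    exact ⟨q, r, rfl, hq, hr⟩
  · rintro ⟨q, r, rfl, hq, hr⟩
    simp [hc, hq, hr]
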